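/- Let s₁^+, s₁^−, s₂^+, s₂^− be points of ℝ³ satisfying |s₁^+ − s₁^−| + |s₂^+ − s₂^−| ≤ |s₁^+ − s₂^−| + |s₂^+ − s₁^−|, and for m = 1, 2 let L_m be the closed line segment joining s_m^+ and s_m^−. Then dist(L₁, L₂) ≥ (1/√2) · min{ dist(s_m^σ, L_n) : m ≠ n, m,n ∈ {1,2}, σ ∈ {+,−} }. -/

import Mathlib

/-!
Let `p ∈ L₁`, `q ∈ L₂` realise `d = dist(L₁, L₂)`. If `p` or `q` is an endpoint there is nothing
to prove. Otherwise `q - p` is orthogonal to both segments; write `s₁⁺ = p + a u`,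
`s₂⁻ = q - e v`, `s₂⁺ = q + c v` with unit vectors `u, v` and `t = ⟪u, v⟫`. Then
`|s₁⁺ - s₂⁻|² = (a + e)² - 2ae(1 - t) + d²`, and as `|s₁⁺ - s₁⁻| = a + |p - s₁⁻|` (and likewise
for `L₂`), the hypothesis forces `2ae(1 - t) ≤ d²` for one of the two crossing pairs, say this
one, with `a ≤ e` after relabelling. The foot of the perpendicular from `s₁⁺` to the line of
`L₂` is `q + a t v`, at distance `√(a²(1 - t²) + d²) ≤ √2 d`; if it lies beyond `s₂⁺`, i.e.
`c < a t`, then the foot `p + c t u` of `s₂⁺` lies in `L₁` and is at distance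
`√(c²(1 - t²) + d²) ≤ √2 d`.
-/

open Set Metric

noncomputable section

abbrev E3 : Type := EuclideanSpace ℝ (Fin 3)

/-- The (infimal) Euclidean distance between two subsets of `ℝ³`. -/
def setDist (S T : Set E3) : ℝ :=
  sInf ((fun p : E3 × E3 => dist p.1 p.2) '' (S ×ˢ T))

open RealInnerProductSpace

theorem isCompact_segment {E : Type*} [AddCommGroup E] [Module ℝ E] [TopologicalSpace E]
    [IsTopologicalAddGroup E] [ContinuousSMul ℝ E] (x y : E) : IsCompact (segment ℝ x y) := by
  rw [segment_eq_image_lineMap]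
  exact isCompact_Icc.image AffineMap.lineMap_continuous

theorem exists_setDist_eq_dist {S T : Set E3} (hS : IsCompact S) (hT : IsCompact T)
    (hS₀ : S.Nonempty) (hT₀ : T.Nonempty) :
    ∃ p ∈ S, ∃ q ∈ T, setDist S T = dist p q ∧ ∀ x ∈ S, ∀ y ∈ T, dist p q ≤ dist x y := by
  obtain ⟨z, hz, hmin⟩ := (hS.prod hT).exists_isMinOn (hS₀.prod hT₀)
    (continuous_dist (α := E3)).continuousOn
  rw [isMinOn_iff] at hmin
  have hleast : IsLeast ((fun p : E3 × E3 => dist p.1 p.2) '' (S ×ˢ T)) (dist z.1 z.2) := by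
    refine ⟨mem_image_of_mem _ hz, ?_⟩
    rintro _ ⟨w, hw, rfl⟩
    exact hmin w hw
  exact ⟨z.1, hz.1, z.2, hz.2, hleast.csInf_eq, fun x hx y hy => hmin (x, y) (mk_mem_prod hx hy)⟩

theorem eq_or_eq_of_mem_segment_of_notMem_openSegment {E : Type*} [AddCommGroup E]
    [Module ℝ E] {x y p : E} (hp : p ∈ segment ℝ x y) (hp' : p ∉ openSegment ℝ x y) :
    p = x ∨ p = y := by
  rw [← insert_endpoints_openSegment] at hp
  simpa [hp'] using hp

theorem infDist_le_sqrt_two_mul_dist {α : Type*} [PseudoMetricSpace α] {s : Set α} {x y : α}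
    (hy : y ∈ s) : infDist x s ≤ √2 * dist x y :=
  (infDist_le_dist_of_mem hy).trans (le_mul_of_one_le_left dist_nonneg Real.one_lt_sqrt_two.le)

theorem infDist_le_sqrt_two_mul_of_dist_sq_le {α : Type*} [PseudoMetricSpace α] {s : Set α}
    {x z : α} {d : ℝ} (hz : z ∈ s) (hd : 0 ≤ d) (h : dist x z ^ 2 ≤ 2 * d ^ 2) :
    infDist x s ≤ √2 * d := by
  refine (infDist_le_dist_of_mem hz).trans ?_
  rw [← Real.sqrt_sq hd, ← Real.sqrt_mul zero_le_two]
  exact Real.le_sqrt_of_sq_le h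

section

variable {V : Type*} [NormedAddCommGroup V] [InnerProductSpace ℝ V]

theorem add_smul_mem_segment (p u : V) {a b s : ℝ} (ha : a ≤ s) (hb : s ≤ b) :
    p + s • u ∈ segment ℝ (p + a • u) (p + b • u) := by
  have h := image_segment ℝ (AffineMap.lineMap p (p + u)) a b
  rw [segment_eq_Icc (ha.trans hb)] at h
  have hmem : AffineMap.lineMap p (p + u) s ∈
      segment ℝ (AffineMap.lineMap p (p + u) a) (AffineMap.lineMap p (p + u) b) :=
    h ▸ mem_image_of_mem _ ⟨ha, hb⟩
  simpa [AffineMap.lineMap_apply, add_comm] using hmem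

theorem eq_sub_smul_and_eq_add_smul_of_mem_segment {x y p : V} (hp : p ∈ segment ℝ x y) :
    x = p - dist p x • ‖y - x‖⁻¹ • (y - x) ∧ y = p + dist y p • ‖y - x‖⁻¹ • (y - x) := by
  rw [segment_eq_image'] at hp
  obtain ⟨θ, ⟨hθ₀, hθ₁⟩, rfl⟩ := hp
  rcases eq_or_ne y x with rfl | hxy
  · simp
  have hD : ‖y - x‖ ≠ 0 := norm_ne_zero_iff.2 (sub_ne_zero.2 hxy)
  have h₁ : dist (x + θ • (y - x)) x = θ * ‖y - x‖ := by
    rw [dist_eq_norm, add_sub_cancel_left, norm_smul, Real.norm_of_nonneg hθ₀]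
  have h₂ : dist y (x + θ • (y - x)) = (1 - θ) * ‖y - x‖ := by
    rw [dist_eq_norm, show y - (x + θ • (y - x)) = (1 - θ) • (y - x) by module, norm_smul,
      Real.norm_of_nonneg (sub_nonneg.2 hθ₁)]
  rw [h₁, h₂, smul_smul, smul_smul, mul_assoc, mul_assoc, mul_inv_cancel₀ hD, mul_one, mul_one]
  constructor <;> module

theorem inner_sub_eq_zero_of_forall_dist_le {x y p q : V} (hp : p ∈ openSegment ℝ x y)
    (hmin : ∀ z ∈ segment ℝ x y, dist p q ≤ dist z q) : ⟪p - q, y - x⟫ = 0 := by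
  rw [openSegment_eq_image'] at hp
  obtain ⟨θ, hθ, rfl⟩ := hp
  have hloc : IsLocalMin (fun s : ℝ => ‖x + s • (y - x) - q‖ ^ 2) θ := by
    filter_upwards [Icc_mem_nhds hθ.1 hθ.2] with s hs
    have := hmin _ (by rw [segment_eq_image']; exact mem_image_of_mem _ hs)
    simp only [dist_eq_norm] at this
    gcongr
  have hderiv : HasDerivAt (fun s : ℝ => ‖x + s • (y - x) - q‖ ^ 2)
      (2 * ⟪x + θ • (y - x) - q, y - x⟫) θ := by
    refine HasDerivAt.norm_sq ?_
    simpa using ((hasDerivAt_id θ).smul_const (y - x)).const_add x |>.sub_const q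
  have := hloc.hasDerivAt_eq_zero hderiv
  linarith

theorem dist_add_smul_add_smul_sq {p q u v : V} (hu : ‖u‖ = 1) (hv : ‖v‖ = 1)
    (hpu : ⟪p - q, u⟫ = 0) (hqv : ⟪q - p, v⟫ = 0) (α β : ℝ) :
    dist (p + α • u) (q + β • v) ^ 2 = α ^ 2 + β ^ 2 - 2 * α * β * ⟪u, v⟫ + dist p q ^ 2 := by
  have hqv' : ⟪p - q, v⟫ = 0 := by rw [← neg_sub, inner_neg_left, hqv, neg_zero]
  rw [dist_eq_norm, show p + α • u - (q + β • v) = (p - q) + (α • u - β • v) by abel,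
    norm_add_sq_real, ← dist_eq_norm, inner_sub_right, real_inner_smul_right,
    real_inner_smul_right, hpu, hqv', norm_sub_sq_real, real_inner_smul_left,
    real_inner_smul_right, norm_smul, norm_smul, hu, hv, Real.norm_eq_abs, Real.norm_eq_abs,
    mul_pow, mul_pow, sq_abs, sq_abs]
  ring

theorem infDist_le_sqrt_two_mul_of_orthogonal {p q u v : V} {a e c : ℝ} (hu : ‖u‖ = 1)
    (hv : ‖v‖ = 1) (hpu : ⟪p - q, u⟫ = 0) (hqv : ⟪q - p, v⟫ = 0) (ha : 0 ≤ a) (hc : 0 ≤ c)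
    (hae : a ≤ e) (hlong : a + e ≤ dist (p + a • u) (q - e • v)) :
    infDist (p + a • u) (segment ℝ (q - e • v) (q + c • v)) ≤ √2 * dist p q ∨
      infDist (q + c • v) (segment ℝ p (p + a • u)) ≤ √2 * dist p q := by
  have hdist := dist_add_smul_add_smul_sq hu hv hpu hqv
  set t := ⟪u, v⟫
  obtain ⟨ht₀, ht₁⟩ : -1 ≤ t ∧ t ≤ 1 := by
    simpa [abs_le, hu, hv] using abs_real_inner_le_norm u v
  rw [sub_eq_add_neg, ← neg_smul] at hlong ⊢
  have hgap : 2 * a * e * (1 - t) ≤ dist p q ^ 2 := by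
    nlinarith [hdist a (-e), pow_le_pow_left₀ (by linarith) hlong 2]
  rcases le_or_gt (a * t) c with hatc | hcat
  · left
    refine infDist_le_sqrt_two_mul_of_dist_sq_le
      (add_smul_mem_segment q v (s := a * t) (by nlinarith) hatc) dist_nonneg ?_
    rw [hdist]
    nlinarith [mul_le_mul_of_nonneg_left (show a * (1 + t) ≤ 2 * e by nlinarith)
      (mul_nonneg ha (sub_nonneg.2 ht₁))]
  · right
    have ht : 0 < t := pos_of_mul_pos_right (hc.trans_lt hcat) ha
    have hca : c ≤ a := hcat.le.trans (mul_le_of_le_one_right ha ht₁)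
    have hmem := add_smul_mem_segment p u (s := c * t) (a := 0) (b := a) (by positivity)
      ((mul_le_of_le_one_right hc ht₁).trans hca)
    rw [zero_smul, add_zero] at hmem
    refine infDist_le_sqrt_two_mul_of_dist_sq_le hmem dist_nonneg ?_
    rw [dist_comm, hdist]
    nlinarith [mul_le_mul (mul_le_mul_of_nonneg_right hca (sub_nonneg.2 ht₁))
      (show c * (1 + t) ≤ 2 * e by nlinarith) (by positivity) (by nlinarith)]

theorem infDist_le_sqrt_two_mul_of_dist_add_dist_le {x₁ y₁ x₂ y₂ p q : V}
    (hp : p ∈ segment ℝ x₁ y₁) (hq : q ∈ segment ℝ x₂ y₂) (h₁ : ⟪p - q, y₁ - x₁⟫ = 0)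
    (h₂ : ⟪q - p, y₂ - x₂⟫ = 0) (hlong : dist y₁ p + dist q x₂ ≤ dist y₁ x₂)
    (hle : dist y₁ p ≤ dist q x₂) :
    infDist y₁ (segment ℝ x₂ y₂) ≤ √2 * dist p q ∨
      infDist y₂ (segment ℝ x₁ y₁) ≤ √2 * dist p q := by
  rcases eq_or_ne y₁ p with rfl | hy₁p
  · exact Or.inl (infDist_le_sqrt_two_mul_dist hq)
  have hne₁ : y₁ - x₁ ≠ 0 := by
    rintro h
    rw [sub_eq_zero.1 h, segment_same, mem_singleton_iff] at hp
    exact hy₁p ((sub_eq_zero.1 h).trans hp.symm)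
  have hne₂ : y₂ - x₂ ≠ 0 := by
    rintro h
    rw [sub_eq_zero.1 h, segment_same, mem_singleton_iff] at hq
    exact hy₁p (dist_le_zero.1 (by simpa [hq] using hle))
  obtain ⟨-, hy₁⟩ := eq_sub_smul_and_eq_add_smul_of_mem_segment hp
  obtain ⟨hx₂', hy₂⟩ := eq_sub_smul_and_eq_add_smul_of_mem_segment hq
  have hcases := infDist_le_sqrt_two_mul_of_orthogonal (c := dist y₂ q)
    (u := ‖y₁ - x₁‖⁻¹ • (y₁ - x₁)) (v := ‖y₂ - x₂‖⁻¹ • (y₂ - x₂))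
    (by simp [norm_smul, hne₁]) (by simp [norm_smul, hne₂])
    (by rw [inner_smul_right, h₁, mul_zero]) (by rw [inner_smul_right, h₂, mul_zero])
    dist_nonneg dist_nonneg hle (by rwa [← hy₁, ← hx₂'])
  rw [← hy₁, ← hx₂', ← hy₂] at hcases
  have hsub : segment ℝ p y₁ ⊆ segment ℝ x₁ y₁ :=
    (convex_segment x₁ y₁).segment_subset hp (right_mem_segment ℝ x₁ y₁)
  exact hcases.imp_right fun h =>
    (infDist_le_infDist_of_subset hsub ⟨p, left_mem_segment ℝ p y₁⟩).trans h

theorem min_infDist_endpoints_le_sqrt_two_mul_dist {x₁ y₁ x₂ y₂ p q : V}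
    (hp : p ∈ segment ℝ x₁ y₁) (hq : q ∈ segment ℝ x₂ y₂) (h₁ : ⟪p - q, y₁ - x₁⟫ = 0)
    (h₂ : ⟪q - p, y₂ - x₂⟫ = 0) (h : dist y₁ x₁ + dist y₂ x₂ ≤ dist y₁ x₂ + dist y₂ x₁) :
    min (min (infDist y₁ (segment ℝ x₂ y₂)) (infDist x₁ (segment ℝ x₂ y₂)))
      (min (infDist y₂ (segment ℝ x₁ y₁)) (infDist x₂ (segment ℝ x₁ y₁))) ≤
      √2 * dist p q := by
  have h₁' : ⟪p - q, x₁ - y₁⟫ = 0 := by rw [← neg_sub y₁, inner_neg_right, h₁, neg_zero]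
  have h₂' : ⟪q - p, x₂ - y₂⟫ = 0 := by rw [← neg_sub y₂, inner_neg_right, h₂, neg_zero]
  have hp' : p ∈ segment ℝ y₁ x₁ := segment_symm ℝ x₁ y₁ ▸ hp
  have hq' : q ∈ segment ℝ y₂ x₂ := segment_symm ℝ x₂ y₂ ▸ hq
  have hdp := dist_add_dist_of_mem_segment hp
  have hdq := dist_add_dist_of_mem_segment hq
  simp only [min_le_iff]
  by_cases hlong : dist y₁ p + dist q x₂ ≤ dist y₁ x₂
  · rcases le_total (dist y₁ p) (dist q x₂) with hle | hle
    · have := infDist_le_sqrt_two_mul_of_dist_add_dist_le hp hq h₁ h₂ hlong hle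
      tauto
    · have := infDist_le_sqrt_two_mul_of_dist_add_dist_le hq' hp' h₂' h₁'
        (by simpa only [dist_comm, add_comm] using hlong) (by simpa only [dist_comm] using hle)
      rw [dist_comm q p, segment_symm ℝ y₁ x₁, segment_symm ℝ y₂ x₂] at this
      tauto
  · have hlong' : dist x₁ p + dist q y₂ ≤ dist x₁ y₂ := by
      simp only [dist_comm] at *
      linarith
    rcases le_total (dist x₁ p) (dist q y₂) with hle | hle
    · have := infDist_le_sqrt_two_mul_of_dist_add_dist_le hp' hq' h₁' h₂' hlong' hle
      rw [segment_symm ℝ y₁ x₁, segment_symm ℝ y₂ x₂] at this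
      tauto
    · have := infDist_le_sqrt_two_mul_of_dist_add_dist_le hq hp h₂ h₁
        (by simpa only [dist_comm, add_comm] using hlong') (by simpa only [dist_comm] using hle)
      rw [dist_comm q p] at this
      tauto

end

/-- **Lemma 4 of Baldo–Jerrard–Orlandi–Soner.**
Let `s₁⁺, s₁⁻, s₂⁺, s₂⁻ ∈ ℝ³` satisfy
`|s₁⁺ − s₁⁻| + |s₂⁺ − s₂⁻| ≤ |s₁⁺ − s₂⁻| + |s₂⁺ − s₁⁻|`, and for `m = 1,2` let `L_m`
be the closed segment joining `s_m⁺` and `s_m⁻`.  Then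
`dist(L₁, L₂) ≥ (1/√2) · min{dist(s_mᵟ, L_n) : m ≠ n, δ ∈ {+,−}}`. -/
theorem dist_between_segments_of_minimal_connection
    (s₁p s₁m s₂p s₂m : E3)
    (h : dist s₁p s₁m + dist s₂p s₂m ≤ dist s₁p s₂m + dist s₂p s₁m) :
    (1 / Real.sqrt 2) *
      min (min (infDist s₁p (segment ℝ s₂m s₂p)) (infDist s₁m (segment ℝ s₂m s₂p)))
          (min (infDist s₂p (segment ℝ s₁m s₁p)) (infDist s₂m (segment ℝ s₁m s₁p))) ≤
      setDist (segment ℝ s₁m s₁p) (segment ℝ s₂m s₂p) := by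
  obtain ⟨p, hp, q, hq, hpq, hmin⟩ := exists_setDist_eq_dist (isCompact_segment s₁m s₁p)
    (isCompact_segment s₂m s₂p) ⟨s₁m, left_mem_segment ℝ _ _⟩ ⟨s₂m, left_mem_segment ℝ _ _⟩
  rw [hpq, one_div, inv_mul_le_iff₀ (by positivity)]
  by_cases hint : p ∈ openSegment ℝ s₁m s₁p ∧ q ∈ openSegment ℝ s₂m s₂p
  · refine min_infDist_endpoints_le_sqrt_two_mul_dist hp hq
      (inner_sub_eq_zero_of_forall_dist_le hint.1 fun z hz => hmin z hz q hq) ?_ h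
    exact inner_sub_eq_zero_of_forall_dist_le hint.2 fun z hz => by
      simpa only [dist_comm] using hmin p hp z hz
  simp only [min_le_iff]
  rcases not_and_or.1 hint with hp' | hq'
  · rcases eq_or_eq_of_mem_segment_of_notMem_openSegment hp hp' with rfl | rfl
    · exact Or.inl (Or.inr (infDist_le_sqrt_two_mul_dist hq))
    · exact Or.inl (Or.inl (infDist_le_sqrt_two_mul_dist hq))
  · rcases eq_or_eq_of_mem_segment_of_notMem_openSegment hq hq' with rfl | rfl
    · exact Or.inr (Or.inr (dist_comm p q ▸ infDist_le_sqrt_two_mul_dist hp))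
    · exact Or.inr (Or.inl (dist_comm p q ▸ infDist_le_sqrt_two_mul_dist hp))
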